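/- arXiv:cs/0410057 — 3 statements merged into one kernel-verified Lean document; each statement's English description precedes it below -/
import Mathlib

section
/- Let p_1, ..., p_k be distinct primes, and for integers e_1, ..., e_k define φ(e_1,...,e_k) = e_1·√p_1 + ... + e_k·√p_k ∈ ℝ. Then φ is an injective group homomorphism from ℤ^k to (ℝ, +); in particular φ(e) = 0 iff e = 0. -/
/-!
Let `K_S` be the field generated over `ℚ` by the `√q`, `q ∈ S`. By induction on the finite set `S`
of primes, `√d ∉ K_S` for every squarefree `d > 1` coprime to `S`: every element of
`K_{S ∪ {q}}` is `a + b√q` with `a, b ∈ K_S`, and squaring `√d = a + b√q` forces `b = 0`,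
`a = 0` or `√q ∈ K_S`, i.e. `√d`, `√(dq)` or `√q` lies in `K_S`. Hence no `√pᵢ` is a rational
combination of the others, which is linear independence of the `√pᵢ` over `ℚ`, hence over `ℤ`.
-/

open Real

namespace Subfield

variable {K : Type*} [Field K]

def quadraticExt (F : Subfield K) (s : K) (hs : s * s ∈ F) : Subfield K where
  carrier := {x | ∃ a ∈ F, ∃ b ∈ F, x = a + b * s}
  zero_mem' := ⟨0, zero_mem _, 0, zero_mem _, by ring⟩
  one_mem' := ⟨1, one_mem _, 0, zero_mem _, by ring⟩
  add_mem' := by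
    rintro _ _ ⟨a, ha, b, hb, rfl⟩ ⟨c, hc, d, hd, rfl⟩
    exact ⟨a + c, add_mem ha hc, b + d, add_mem hb hd, by ring⟩
  neg_mem' := by
    rintro _ ⟨a, ha, b, hb, rfl⟩
    exact ⟨-a, neg_mem ha, -b, neg_mem hb, by ring⟩
  mul_mem' := by
    rintro _ _ ⟨a, ha, b, hb, rfl⟩ ⟨c, hc, d, hd, rfl⟩
    exact ⟨a * c + b * d * (s * s), add_mem (mul_mem ha hc) (mul_mem (mul_mem hb hd) hs),
      a * d + b * c, add_mem (mul_mem ha hd) (mul_mem hb hc), by ring⟩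
  inv_mem' := by
    rintro x ⟨a, ha, b, hb, rfl⟩
    by_cases hconj : a - b * s = 0
    · have hx : a + b * s = a + a := by rw [sub_eq_zero.mp hconj]
      exact ⟨(a + b * s)⁻¹, by rw [hx]; exact inv_mem (add_mem ha ha), 0, zero_mem _, by ring⟩
    set N := a * a - b * b * (s * s)
    have hN : N ∈ F := sub_mem (mul_mem ha ha) (mul_mem (mul_mem hb hb) hs)
    have hinv : (a + b * s)⁻¹ = (a - b * s) * N⁻¹ := by
      rw [show N = (a - b * s) * (a + b * s) by ring, mul_inv, mul_inv_cancel_left₀ hconj]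
    exact ⟨a * N⁻¹, mul_mem ha (inv_mem hN), -b * N⁻¹, mul_mem (neg_mem hb) (inv_mem hN),
      by rw [hinv]; ring⟩

theorem exists_eq_add_mul_of_mem_closure_insert {T : Set K} {s x : K}
    (hs : s * s ∈ closure T) (hx : x ∈ closure (insert s T)) :
    ∃ a ∈ closure T, ∃ b ∈ closure T, x = a + b * s := by
  have hle : closure (insert s T) ≤ quadraticExt (closure T) s hs :=
    closure_le.mpr <| Set.insert_subset_iff.mpr
      ⟨⟨0, zero_mem _, 1, one_mem _, by ring⟩,
        fun t ht => ⟨t, subset_closure ht, 0, zero_mem _, by ring⟩⟩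
  exact hle hx

end Subfield

noncomputable def sqrtField (S : Finset ℕ) : Subfield ℝ :=
  Subfield.closure ((fun q : ℕ => √(q : ℝ)) '' S)

theorem sqrt_mem_sqrtField {S : Finset ℕ} {q : ℕ} (hq : q ∈ S) : √(q : ℝ) ∈ sqrtField S :=
  Subfield.subset_closure ⟨q, hq, rfl⟩

theorem sqrtField_empty : sqrtField ∅ = (algebraMap ℚ ℝ).fieldRange := by
  rw [sqrtField, Finset.coe_empty, Set.image_empty, Subfield.closure_empty,
    Subfield.bot_eq_of_charZero]

theorem sqrt_mem_or_sqrt_mul_mem_or_sqrt_mem_of_mem_sqrtField_insert {S : Finset ℕ} {q d : ℕ}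
    (h : √(d : ℝ) ∈ sqrtField (insert q S)) :
    √(d : ℝ) ∈ sqrtField S ∨ √((d * q : ℕ) : ℝ) ∈ sqrtField S ∨ √(q : ℝ) ∈ sqrtField S := by
  set F := sqrtField S
  have hq : √(q : ℝ) * √(q : ℝ) = q := mul_self_sqrt (Nat.cast_nonneg q)
  have hd : √(d : ℝ) * √(d : ℝ) = d := mul_self_sqrt (Nat.cast_nonneg d)
  obtain ⟨a, ha, b, hb, hab⟩ : ∃ a ∈ F, ∃ b ∈ F, √(d : ℝ) = a + b * √(q : ℝ) := by
    refine Subfield.exists_eq_add_mul_of_mem_closure_insert (by rw [hq]; exact natCast_mem _ q) ?_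
    rwa [sqrtField, Finset.coe_insert, Set.image_insert_eq] at h
  rcases eq_or_ne b 0 with rfl | hb0
  · exact Or.inl (by rw [hab]; simpa using ha)
  rcases eq_or_ne a 0 with rfl | ha0
  · refine Or.inr (Or.inl ?_)
    have : √((d * q : ℕ) : ℝ) = b * q := by
      rw [Nat.cast_mul, sqrt_mul (Nat.cast_nonneg d), hab, zero_add, mul_assoc, hq]
    rw [this]
    exact mul_mem hb (natCast_mem _ q)
  · refine Or.inr (Or.inr ?_)
    have : √(q : ℝ) = (d - a * a - b * b * q) / (2 * a * b) := by
      rw [eq_div_iff (by positivity)]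
      linear_combination (-(√(d : ℝ) + a + b * √(q : ℝ))) * hab + hd - b * b * hq
    rw [this]
    have h2 : (2 : ℝ) ∈ F := ofNat_mem F 2
    exact div_mem (sub_mem (sub_mem (natCast_mem _ d) (mul_mem ha ha))
      (mul_mem (mul_mem hb hb) (natCast_mem _ q))) (mul_mem (mul_mem h2 ha) hb)

theorem irrational_sqrt_of_squarefree {d : ℕ} (hd : Squarefree d) (hd1 : 1 < d) :
    Irrational √(d : ℝ) := by
  rw [irrational_sqrt_natCast_iff]
  rintro ⟨r, rfl⟩
  have : r = 1 := Nat.isUnit_iff.mp (hd r dvd_rfl)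
  subst this
  omega

theorem sqrt_notMem_sqrtField {S : Finset ℕ} (hS : ∀ q ∈ S, q.Prime) {d : ℕ}
    (hd : Squarefree d) (hd1 : 1 < d) (hdS : ∀ q ∈ S, ¬ q ∣ d) : √(d : ℝ) ∉ sqrtField S := by
  induction S using Finset.induction_on generalizing d with
  | empty =>
    rw [sqrtField_empty]
    rintro ⟨r, hr⟩
    exact irrational_sqrt_of_squarefree hd hd1 ⟨r, hr⟩
  | insert q S hqS ih =>
    have hq : q.Prime := hS q (Finset.mem_insert_self q S)
    have hS' : ∀ r ∈ S, r.Prime := fun r hr => hS r (Finset.mem_insert_of_mem hr)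
    have hqd : ¬ q ∣ d := hdS q (Finset.mem_insert_self q S)
    have hSd : ∀ r ∈ S, ¬ r ∣ d := fun r hr => hdS r (Finset.mem_insert_of_mem hr)
    have hSq : ∀ r ∈ S, ¬ r ∣ q := fun r hr hrq =>
      hqS ((Nat.prime_dvd_prime_iff_eq (hS' r hr) hq).mp hrq ▸ hr)
    intro hmem
    rcases sqrt_mem_or_sqrt_mul_mem_or_sqrt_mem_of_mem_sqrtField_insert hmem with h | h | h
    · exact ih hS' hd hd1 hSd h
    · have hdq : Squarefree (d * q) :=
        (Nat.squarefree_mul ((hq.coprime_iff_not_dvd.mpr hqd).symm)).mpr ⟨hd, hq.squarefree⟩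
      refine ih hS' hdq (by nlinarith [hq.one_lt]) (fun r hr hrdq => ?_) h
      rcases (Nat.Prime.dvd_mul (hS' r hr)).mp hrdq with hrd | hrq
      exacts [hSd r hr hrd, hSq r hr hrq]
    · exact ih hS' hq.squarefree hq.one_lt hSq h

theorem linearIndependent_sqrt_prime {ι : Type*} {p : ι → ℕ} (hp : ∀ i, (p i).Prime)
    (hinj : Function.Injective p) : LinearIndependent ℚ (fun i => √(p i : ℝ)) := by
  classical
  rw [linearIndependent_iff']
  intro s g hg i hi
  by_contra hgi
  have hrest : ∀ q ∈ (s.erase i).image p, ¬ q ∣ p i := by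
    simp only [Finset.mem_image, Finset.mem_erase]
    rintro _ ⟨j, ⟨hji, -⟩, rfl⟩ hdvd
    exact hji (hinj ((Nat.prime_dvd_prime_iff_eq (hp j) (hp i)).mp hdvd))
  refine sqrt_notMem_sqrtField (fun q hq => ?_) (hp i).squarefree
    (hp i).one_lt hrest ?_
  · obtain ⟨j, -, rfl⟩ := Finset.mem_image.mp hq
    exact hp j
  have hsplit := Finset.add_sum_erase s (fun j => g j • √(p j : ℝ)) hi
  rw [hg] at hsplit
  rw [← inv_smul_smul₀ hgi √(p i : ℝ), eq_neg_of_add_eq_zero_left hsplit]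
  exact SubfieldClass.qsmul_mem _ _ (neg_mem (sum_mem fun j hj =>
    SubfieldClass.qsmul_mem _ _ (sqrt_mem_sqrtField (Finset.mem_image_of_mem p hj))))

theorem real_counter_faithful
    (k : ℕ) (p : Fin k → ℕ) (hp : ∀ i, (p i).Prime)
    (hinj : Function.Injective p) :
    let φ : (Fin k → ℤ) → ℝ := fun e => ∑ i, (e i : ℝ) * Real.sqrt (p i)
    Function.Injective φ ∧
    (∀ e f : Fin k → ℤ, φ (e + f) = φ e + φ f) ∧
    (∀ e : Fin k → ℤ, φ e = 0 ↔ e = 0) := by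
  intro φ
  have hφ : φ = Fintype.linearCombination ℤ (fun i => √(p i : ℝ)) := by
    funext e
    simp [φ, Fintype.linearCombination_apply, zsmul_eq_mul]
  have hφinj : Function.Injective φ := hφ ▸ linearIndependent_iff_injective_fintypeLinearCombination.mp
    ((linearIndependent_sqrt_prime hp hinj).restrict_scalars' ℤ)
  rw [hφ] at hφinj ⊢
  exact ⟨hφinj, map_add _, fun e => map_eq_zero_iff _ hφinj⟩
end

section
/- Let A = [[4,3,0],[-3,4,0],[0,0,5]] and B = [[4,0,3],[0,5,0],[-3,0,4]] over ℚ. If w_1,...,w_n and w'_1,...,w'_n are sequences over {A,B} and (w'_n)⁻¹·...·(w'_1)⁻¹·w_1·...·w_n is the identity matrix, then w_j = w'_j for all j. -/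
/-!
Reduce modulo 5. Both generators have integer entries, and modulo 5 each has rank one: the image
of `A` is spanned by `(2, 1, 0)` and that of `B` by `(2, 0, 1)`, and each of them sends either of
these two vectors to a nonzero multiple of the one spanning its own image. So a nonempty word,
applied to `(2, 1, 0)`, gives modulo 5 a nonzero multiple of the vector of its first letter: the
product determines the first letter. Cancelling it (the generators are invertible over `ℚ`) and
inducting, the product determines the whole word among words of the same length.
-/

open scoped Matrix

theorem List.eq_of_prod_map_eq {M α : Type*} [Monoid M] {f : α → M} (hf : ∀ a, IsUnit (f a))
    (head : ∀ a a' t t', ((a :: t).map f).prod = ((a' :: t').map f).prod → a = a') :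
    ∀ {l l' : List α}, l.length = l'.length → (l.map f).prod = (l'.map f).prod → l = l'
  | [], [], _, _ => rfl
  | a :: t, a' :: t', hlen, h => by
    obtain rfl := head a a' t t' h
    rw [List.map_cons, List.map_cons, List.prod_cons, List.prod_cons, (hf a).mul_right_inj] at h
    rw [List.eq_of_prod_map_eq hf head (Nat.succ_injective hlen) h]

namespace AmbainisWatrous

variable (R : Type*) [Ring R]

/-- `A` and `B` over an arbitrary ring, so that a word can be read over `ℚ`, `ℤ` and `ZMod 5`. -/
def gen : Bool → Matrix (Fin 3) (Fin 3) R
  | true => !![4, 3, 0; -3, 4, 0; 0, 0, 5]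
  | false => !![4, 0, 3; 0, 5, 0; -3, 0, 4]

def word (l : List Bool) : Matrix (Fin 3) (Fin 3) R := (l.map (gen R)).prod

variable {R} {S : Type*} [Ring S]

theorem map_gen (f : R →+* S) (b : Bool) : (gen R b).map f = gen S b := by
  cases b <;> ext i j <;> fin_cases i <;> fin_cases j <;> simp [gen, map_ofNat]

theorem map_word (f : R →+* S) (l : List Bool) : (word R l).map f = word S l := by
  simpa [word, List.map_map, Function.comp_def, map_gen] using
    map_list_prod f.mapMatrix (l.map (gen R))

theorem word_rat_eq_map (l : List Bool) : word ℚ l = (word ℤ l).map (↑) := by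
  rw [← map_word (Int.castRingHom ℚ)]
  rfl

theorem isUnit_gen (b : Bool) : IsUnit (gen ℚ b) := by
  rw [Matrix.isUnit_iff_isUnit_det, isUnit_iff_ne_zero]
  cases b <;> simp [gen, Matrix.det_fin_three] <;> norm_num

def line : Bool → Fin 3 → ZMod 5
  | true => ![2, 1, 0]
  | false => ![2, 0, 1]

theorem gen_mulVec_line (b b' : Bool) :
    ∃ μ : ZMod 5, μ ≠ 0 ∧ gen (ZMod 5) b *ᵥ line b' = μ • line b := by
  cases b <;> cases b' <;> decide

theorem word_mulVec_line (b : Bool) (t : List Bool) :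
    ∃ μ : ZMod 5, μ ≠ 0 ∧ word (ZMod 5) (b :: t) *ᵥ line true = μ • line b := by
  induction t generalizing b with
  | nil => simpa [word] using gen_mulVec_line b true
  | cons b' t ih =>
    have : Fact (Nat.Prime 5) := ⟨Nat.prime_five⟩
    obtain ⟨μ, hμ, hb'⟩ := ih b'
    obtain ⟨ν, hν, hb⟩ := gen_mulVec_line b b'
    refine ⟨ν * μ, mul_ne_zero hν hμ, ?_⟩
    rw [word, List.map_cons, List.prod_cons, ← Matrix.mulVec_mulVec, ← word, hb',
      Matrix.mulVec_smul, hb, smul_smul, mul_comm]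

theorem eq_of_smul_line_eq {b b' : Bool} {μ ν : ZMod 5} (hμ : μ ≠ 0)
    (h : μ • line b = ν • line b') : b = b' := by
  cases b <;> cases b'
  all_goals first | rfl | simp_all [line, funext_iff, Fin.forall_fin_succ]

theorem eq_of_word_cons_eq {b b' : Bool} {t t' : List Bool}
    (h : word ℚ (b :: t) = word ℚ (b' :: t')) : b = b' := by
  have hℤ : word ℤ (b :: t) = word ℤ (b' :: t') := by
    rw [word_rat_eq_map, word_rat_eq_map] at h
    exact Matrix.map_injective Int.cast_injective h
  have h₅ : word (ZMod 5) (b :: t) = word (ZMod 5) (b' :: t') := by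
    rw [← map_word (Int.castRingHom (ZMod 5)), hℤ, map_word]
  obtain ⟨μ, hμ, hb⟩ := word_mulVec_line b t
  obtain ⟨ν, -, hb'⟩ := word_mulVec_line b' t'
  exact eq_of_smul_line_eq hμ (by rw [← hb, ← hb', h₅])

end AmbainisWatrous

open AmbainisWatrous in
theorem AW_freeness_on_positive_words
    (n : ℕ) (w w' : Fin n → Matrix (Fin 3) (Fin 3) ℚ)
    (A : Matrix (Fin 3) (Fin 3) ℚ) (B : Matrix (Fin 3) (Fin 3) ℚ)
    (hA : A = !![4, 3, 0; -3, 4, 0; 0, 0, 5])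
    (hB : B = !![4, 0, 3; 0, 5, 0; -3, 0, 4])
    (hw : ∀ j, w j = A ∨ w j = B) (hw' : ∀ j, w' j = A ∨ w' j = B)
    (h : (List.ofFn fun j => (w' j)⁻¹).reverse.prod *
          (List.ofFn fun j => w j).prod = 1) :
    ∀ j, w j = w' j := by
  subst hA hB
  have hgen : ∀ M, M = gen ℚ true ∨ M = gen ℚ false → ∃ c, M = gen ℚ c := by
    rintro M (hM | hM)
    exacts [⟨true, hM⟩, ⟨false, hM⟩]
  choose b hb using fun j => hgen _ (hw j)
  choose b' hb' using fun j => hgen _ (hw' j)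
  obtain rfl : w = fun j => gen ℚ (b j) := funext hb
  obtain rfl : w' = fun j => gen ℚ (b' j) := funext hb'
  have hunit : IsUnit (word ℚ (List.ofFn b)).det := by
    rw [← Matrix.isUnit_iff_isUnit_det]
    exact List.prod_isUnit (by simp [isUnit_gen])
  have hinv : (word ℚ (List.ofFn b'))⁻¹ * word ℚ (List.ofFn b) = 1 := by
    rwa [word, word, Matrix.list_prod_inv_reverse, List.map_reverse, List.map_ofFn,
      List.map_ofFn, List.map_ofFn]
  have hprod : word ℚ (List.ofFn b) = word ℚ (List.ofFn b') :=
    Matrix.inv_inj (Matrix.inv_eq_left_inv hinv) hunit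
  have hbb' := List.eq_of_prod_map_eq isUnit_gen (fun _ _ _ _ => eq_of_word_cons_eq)
    (by simp) hprod
  intro j
  rw [List.ofFn_injective hbb']
end

section
/- Interchange lemma: Let M be a one-way partially blind deterministic real-counter machine with state set Q recognizing language L, let ρ_k be the largest counter generator, and let r = |Q|² + 1. For any decomposition x = v_1 w_1 v_2 w_2 ... v_r w_r v_{r+1} ∈ L with each |w_i| ≥ 1 and with the counter value after reading v_1 at least (Σ_{i=2}^r |v_i| + Σ_{i=1}^r |w_i|)·ρ_k, there exist indices 1 ≤ l < m ≤ r such that the string x' obtained from x by swapping w_l and w_m is also in L. -/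
/-- A one-way partially blind deterministic automaton with a real counter
`C_ℝ(k) = (ℝ, {√p₁,…,√p_k}, ℝ⁻)`: at each step it changes state and adds or
subtracts one generator `√pᵢ` (square roots of distinct primes). -/
structure RealCounterPBDC (σ : Type) where
  k : ℕ
  p : Fin k → ℕ
  p_prime : ∀ i, (p i).Prime
  p_inj : Function.Injective p
  Q : Type
  [finQ : Fintype Q]
  q₀ : Q
  /-- transition: next state, together with the generator index and a flag
  (`true` = increment by `√pᵢ`, `false` = decrement by `√pᵢ`). -/
  δ : Q → σ → Q × (Fin k × Bool)
  accept : Set Q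

namespace RealCounterPBDC

variable {σ : Type} (M : RealCounterPBDC σ)

/-- The real value added to the counter in one step. -/
noncomputable def incr (m : Fin M.k × Bool) : ℝ :=
  if m.2 then Real.sqrt (M.p m.1) else -Real.sqrt (M.p m.1)

/-- One step on a configuration (state, counter value). -/
noncomputable def step (c : M.Q × ℝ) (a : σ) : M.Q × ℝ :=
  ((M.δ c.1 a).1, c.2 + M.incr (M.δ c.1 a).2)

/-- Configuration reached from the initial configuration after reading `x`. -/
noncomputable def run (x : List σ) : M.Q × ℝ :=
  x.foldl M.step (M.q₀, 0)

/-- Counter value after reading `x` from the start. -/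
noncomputable def ctr (x : List σ) : ℝ := (M.run x).2

/-- `M` accepts `x` iff the counter stays nonnegative throughout (partial
blindness: otherwise the machine crashes), the final state is accepting, and
the final counter value is `0`. -/
noncomputable def language : Language σ :=
  { x | (∀ y, y <+: x → 0 ≤ M.ctr y) ∧ (M.run x).1 ∈ M.accept ∧ M.ctr x = 0 }

end RealCounterPBDC

attribute [instance] RealCounterPBDC.finQ

/-!
There are more blocks `wᵢ` than pairs of states, so two blocks `w_l`, `w_m` with `l < m` are
entered in the same state and left in the same state. The machine is blind: reading a word from
state `q` leads to a state that does not depend on the counter and adds to the counter a gain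
that depends only on `q` and the word. So after the swap the run passes through the same states
at the block boundaries and, from the end of `w_m` on, has the same counter as before, the two
gains having merely been added in the other order. Before that point the counter can drop by at
most `ρ_k` per letter, which the lower bound on the counter after `v₁` absorbs.
-/

namespace List

variable {α : Type*}

theorem take_eq_take_append_cons_take_drop (L : List α) {l m : ℕ} (hlm : l < m)
    (hm : m ≤ L.length) :
    L.take m = L.take l ++ L[l] :: (L.drop (l + 1)).take (m - (l + 1)) := by
  obtain ⟨k, rfl⟩ : ∃ k, m = l + 1 + k := ⟨m - (l + 1), by omega⟩
  rw [take_add, take_add_one, getElem?_eq_getElem (by omega), Option.toList_some, append_assoc,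
    singleton_append, Nat.add_sub_cancel_left]

theorem eq_take_append_cons_take_drop_append_cons_drop (L : List α) {l m : ℕ} (hlm : l < m)
    (hm : m < L.length) :
    L = L.take l ++ L[l] :: ((L.drop (l + 1)).take (m - (l + 1)) ++ L[m] :: L.drop (m + 1)) := by
  conv_lhs => rw [← take_append_drop m L, drop_eq_getElem_cons hm,
    take_eq_take_append_cons_take_drop L hlm hm.le]
  simp

theorem length_flatten_ofFn_append {r : ℕ} (u w : Fin r → List α) :
    (ofFn fun i => u i ++ w i).flatten.length = ∑ i, (u i).length + ∑ i, (w i).length := by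
  simp [length_flatten, sum_ofFn, Finset.sum_add_distrib]

end List

open Finset in
theorem Fin.sum_castSucc_eq_add_sum_filter {β : Type*} [AddCommMonoid β] {n : ℕ} (hn : 0 < n)
    (f : Fin (n + 1) → β) :
    ∑ i : Fin n, f i.castSucc = f 0 + ∑ i ∈ univ.filter (fun i => i ≠ 0 ∧ i ≠ Fin.last n), f i := by
  obtain ⟨k, rfl⟩ : ∃ k, n = k + 1 := ⟨n - 1, by omega⟩
  rw [Fin.sum_univ_succ]
  conv_rhs => rw [sum_filter, Fin.sum_univ_succ, Fin.sum_univ_castSucc]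
  simp [Fin.succ_ne_zero, (Fin.castSucc_lt_last _).ne]

section Interleave

variable {α : Type*} {r : ℕ}

def interleavePrefix (u w : Fin r → List α) (i : Fin r) : List α :=
  ((List.ofFn fun j => u j ++ w j).take i).flatten ++ u i

theorem exists_flatten_ofFn_swap (u w : Fin r → List α) {l m : Fin r} (hlm : l < m) :
    ∃ B C : List α,
      (List.ofFn fun i => u i ++ w i).flatten = interleavePrefix u w l ++ w l ++ B ++ w m ++ C ∧
      (List.ofFn fun i => u i ++ w (Equiv.swap l m i)).flatten =
        interleavePrefix u w l ++ w m ++ B ++ w l ++ C ∧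
      interleavePrefix u w m = interleavePrefix u w l ++ w l ++ B := by
  set L := List.ofFn fun i => u i ++ w i
  set L' := List.ofFn fun i => u i ++ w (Equiv.swap l m i)
  have hlm' : (l : ℕ) < m := hlm
  have hagree : ∀ i : ℕ, i ≠ l → i ≠ m → L'[i]? = L[i]? := by
    intro i hl hm
    simp only [L, L', List.getElem?_ofFn]
    split_ifs
    · rw [Equiv.swap_apply_of_ne_of_ne (Fin.ne_of_val_ne hl) (Fin.ne_of_val_ne hm)]
    · rfl
  have htake : L'.take l = L.take l := by
    ext1 i
    simp only [List.getElem?_take]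
    split_ifs
    · exact hagree i (by omega) (by omega)
    · rfl
  have hmid : (L'.drop (l + 1)).take (m - (l + 1)) = (L.drop (l + 1)).take (m - (l + 1)) := by
    ext1 i
    simp only [List.getElem?_take, List.getElem?_drop]
    split_ifs
    · exact hagree _ (by omega) (by omega)
    · rfl
  have hdrop : L'.drop (m + 1) = L.drop (m + 1) := by
    ext1 i
    simp only [List.getElem?_drop]
    exact hagree _ (by omega) (by omega)
  refine ⟨((L.drop (l + 1)).take (m - (l + 1))).flatten ++ u m, (L.drop (m + 1)).flatten,
    ?_, ?_, ?_⟩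
  · conv_lhs => rw [L.eq_take_append_cons_take_drop_append_cons_drop hlm' (by simp [L])]
    simp [interleavePrefix, L]
  · conv_lhs => rw [L'.eq_take_append_cons_take_drop_append_cons_drop hlm' (by simp [L']),
      htake, hmid, hdrop]
    simp [interleavePrefix, L, L']
  · rw [interleavePrefix, L.take_eq_take_append_cons_take_drop hlm' (by simp [L])]
    simp [interleavePrefix, L]

end Interleave

namespace RealCounterPBDC

variable {σ : Type} (M : RealCounterPBDC σ)

noncomputable def stateAfter (q : M.Q) (x : List σ) : M.Q := (x.foldl M.step (q, 0)).1

noncomputable def gain (q : M.Q) (x : List σ) : ℝ := (x.foldl M.step (q, 0)).2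

theorem foldl_step (x : List σ) (q : M.Q) (c : ℝ) :
    x.foldl M.step (q, c) = (M.stateAfter q x, c + M.gain q x) := by
  induction x generalizing q c with
  | nil => simp [stateAfter, gain]
  | cons a x ih =>
    simp only [stateAfter, gain, List.foldl_cons, step]
    rw [ih, ih, zero_add, add_assoc]

theorem run_eq (x : List σ) : M.run x = (M.stateAfter M.q₀ x, M.gain M.q₀ x) := by
  rw [run, foldl_step, zero_add]

theorem run_append (x y : List σ) : M.run (x ++ y) = y.foldl M.step (M.run x) :=
  List.foldl_append

theorem stateAfter_append (q : M.Q) (x y : List σ) :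
    M.stateAfter q (x ++ y) = M.stateAfter (M.stateAfter q x) y := by
  rw [stateAfter, List.foldl_append, foldl_step, foldl_step]

theorem ctr_append (x y : List σ) :
    M.ctr (x ++ y) = M.ctr x + M.gain (M.stateAfter M.q₀ x) y := by
  rw [ctr, run_append, run_eq, foldl_step, ctr, run_eq]

theorem neg_length_mul_le_gain {ρ : ℝ} (hρ : ∀ i, √(M.p i : ℝ) ≤ ρ) (q : M.Q) (x : List σ) :
    -(x.length * ρ) ≤ M.gain q x := by
  induction x generalizing q with
  | nil => simp [gain]
  | cons a x ih =>
    have hincr : -ρ ≤ M.incr (M.δ q a).2 := by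
      unfold incr
      split_ifs
      · linarith [hρ (M.δ q a).2.1, Real.sqrt_nonneg (M.p (M.δ q a).2.1 : ℝ)]
      · linarith [hρ (M.δ q a).2.1]
    have hcons : M.gain q (a :: x) = M.incr (M.δ q a).2 + M.gain (M.δ q a).1 x := by
      rw [gain, List.foldl_cons, step, foldl_step, zero_add]
    rw [hcons, List.length_cons, Nat.cast_succ]
    linarith [ih (M.δ q a).1]

theorem foldl_step_swap {q : M.Q} {x₁ x₂ b : List σ}
    (hexit : M.stateAfter q x₂ = M.stateAfter q x₁) (hloop : M.stateAfter (M.stateAfter q x₁) b = q)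
    (c : ℝ) :
    (x₂ ++ b ++ x₁).foldl M.step (q, c) = (x₁ ++ b ++ x₂).foldl M.step (q, c) := by
  simp only [List.foldl_append, foldl_step, hexit, hloop, Prod.mk.injEq, true_and]
  ring

theorem run_swap {a x₁ x₂ b : List σ}
    (hexit : M.stateAfter (M.stateAfter M.q₀ a) x₂ = M.stateAfter (M.stateAfter M.q₀ a) x₁)
    (hloop : M.stateAfter M.q₀ (a ++ x₁ ++ b) = M.stateAfter M.q₀ a) (c : List σ) :
    M.run (a ++ x₂ ++ b ++ x₁ ++ c) = M.run (a ++ x₁ ++ b ++ x₂ ++ c) := by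
  rw [stateAfter_append, stateAfter_append] at hloop
  have hassoc (y₁ y₂ : List σ) : a ++ y₁ ++ b ++ y₂ ++ c = a ++ (y₁ ++ b ++ y₂) ++ c := by simp
  rw [hassoc, hassoc, M.run_append _ c, M.run_append _ c, run_append, run_append, run_eq,
    M.foldl_step_swap hexit hloop]

theorem mem_language_of_run_eq {ρ : ℝ} (hρ0 : 0 ≤ ρ) (hρ : ∀ i, √(M.p i : ℝ) ≤ ρ)
    {a s s' c : List σ} (hx : a ++ s ++ c ∈ M.language) (hrun : M.run (a ++ s') = M.run (a ++ s))
    (hctr : s'.length * ρ ≤ M.ctr a) : a ++ s' ++ c ∈ M.language := by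
  have hrun_append (t : List σ) : M.run (a ++ s' ++ t) = M.run (a ++ s ++ t) := by
    rw [run_append, hrun, ← run_append]
  obtain ⟨hpre, hacc, hzero⟩ := hx
  refine ⟨fun y hy => ?_, by rwa [hrun_append], by rwa [ctr, hrun_append]⟩
  rcases List.prefix_or_prefix_of_prefix hy
    ((List.prefix_append a s').trans (List.prefix_append _ c)) with hya | hay
  · exact hpre y (hya.trans ((List.prefix_append a s).trans (List.prefix_append _ c)))
  obtain ⟨t, rfl⟩ := hay
  rcases List.prefix_or_prefix_of_prefix hy (List.prefix_append (a ++ s') c) with hys | hsy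
  · have ht : t.length ≤ s'.length := ((List.prefix_append_right_inj a).1 hys).length_le
    have : (t.length : ℝ) * ρ ≤ s'.length * ρ := by gcongr
    rw [ctr_append]
    linarith [M.neg_length_mul_le_gain hρ (M.stateAfter M.q₀ a) t]
  · obtain ⟨t', ht'⟩ := hsy
    have htc : t' <+: c := by
      rw [← ht', List.append_assoc] at hy
      exact (List.prefix_append_right_inj (a ++ s')).1 (by simpa using hy)
    rw [← ht', ctr, hrun_append, ← ctr]
    exact hpre _ ((List.prefix_append_right_inj _).2 htc)

theorem exists_lt_run_flatten_ofFn_swap_eq {r : ℕ} (hr : Fintype.card M.Q ^ 2 < r)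
    (u w : Fin r → List σ) :
    ∃ l m : Fin r, l < m ∧ M.run (List.ofFn fun i => u i ++ w (Equiv.swap l m i)).flatten =
      M.run (List.ofFn fun i => u i ++ w i).flatten := by
  let entry (i : Fin r) : M.Q := M.stateAfter M.q₀ (interleavePrefix u w i)
  have hcard : Fintype.card (M.Q × M.Q) < Fintype.card (Fin r) := by
    rwa [Fintype.card_prod, Fintype.card_fin, ← sq]
  obtain ⟨i, j, hij, hentry_exit⟩ :=
    Fintype.exists_ne_map_eq_of_card_lt (fun i => (entry i, M.stateAfter (entry i) (w i))) hcard
  wlog hlt : i < j generalizing i j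
  · exact this j i hij.symm hentry_exit.symm (hij.lt_or_gt.resolve_left hlt)
  obtain ⟨hentry, hexit⟩ := Prod.mk.inj hentry_exit
  obtain ⟨B, C, hx, hx', hpre⟩ := exists_flatten_ofFn_swap u w hlt
  refine ⟨i, j, hlt, ?_⟩
  rw [hx, hx']
  exact M.run_swap (by rw [← hentry] at hexit; exact hexit.symm)
    (by rw [← hpre]; exact hentry.symm) C

end RealCounterPBDC

theorem interchange_lemma_general
    {σ : Type} (M : RealCounterPBDC σ)
    (r : ℕ) (hr : r = Fintype.card M.Q ^ 2 + 1)
    (ρk : ℝ) (hρk : ρk = ⨆ i, Real.sqrt (M.p i))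
    (v : Fin (r + 1) → List σ) (w : Fin r → List σ)
    (hx : (List.ofFn fun i : Fin r => v i.castSucc ++ w i).flatten ++ v (Fin.last r)
            ∈ M.language)
    (hctr : ((∑ i ∈ Finset.univ.filter
                fun i : Fin (r + 1) => i ≠ 0 ∧ i ≠ Fin.last r, (v i).length) +
              ∑ i, (w i).length : ℕ) * ρk ≤ M.ctr (v 0)) :
    ∃ l m : Fin r, l < m ∧
      (List.ofFn fun i : Fin r => v i.castSucc ++ w (Equiv.swap l m i)).flatten
        ++ v (Fin.last r) ∈ M.language := by
  have hρ (i : Fin M.k) : √(M.p i : ℝ) ≤ ρk :=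
    hρk ▸ le_ciSup (f := fun i => √(M.p i : ℝ)) (Set.finite_range _).bddAbove i
  have hρ0 : 0 ≤ ρk := hρk ▸ Real.iSup_nonneg fun i => Real.sqrt_nonneg _
  obtain ⟨l, m, hlm, hrun⟩ :=
    M.exists_lt_run_flatten_ofFn_swap_eq (by omega) (fun i => v i.castSucc) w
  refine ⟨l, m, hlm, ?_⟩
  have hlen := List.length_flatten_ofFn_append (fun i => v i.castSucc)
    (fun i => w (Equiv.swap l m i))
  rw [Equiv.sum_comp (Equiv.swap l m) (fun i => (w i).length),
    Fin.sum_castSucc_eq_add_sum_filter (by omega) (fun i => (v i).length)] at hlen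
  subst hr
  have hsplit (w' : Fin _ → List σ) : (List.ofFn fun i => v i.castSucc ++ w' i).flatten =
      v 0 ++ (w' 0 ++ (List.ofFn fun i => v i.succ.castSucc ++ w' i.succ).flatten) := by
    simp [List.ofFn_succ]
  rw [hsplit] at hx hlen ⊢
  rw [hsplit, hsplit] at hrun
  refine M.mem_language_of_run_eq hρ0 hρ hx hrun (le_trans ?_ hctr)
  gcongr
  simp only [List.length_append] at hlen ⊢
  omega

theorem interchange_lemma
    {σ : Type} (M : RealCounterPBDC σ)
    (r : ℕ) (hr : r = Fintype.card M.Q ^ 2 + 1)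
    (ρk : ℝ) (hρk : ρk = ⨆ i, Real.sqrt (M.p i))
    (v : Fin (r + 1) → List σ) (w : Fin r → List σ)
    (hw : ∀ i, 1 ≤ (w i).length)
    (hx : (List.ofFn fun i : Fin r => v i.castSucc ++ w i).flatten ++ v (Fin.last r)
            ∈ M.language)
    (hctr : ((∑ i ∈ Finset.univ.filter
                fun i : Fin (r + 1) => i ≠ 0 ∧ i ≠ Fin.last r, (v i).length) +
              ∑ i, (w i).length : ℕ) * ρk ≤ M.ctr (v 0)) :
    ∃ l m : Fin r, l < m ∧
      (List.ofFn fun i : Fin r => v i.castSucc ++ w (Equiv.swap l m i)).flatten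
        ++ v (Fin.last r) ∈ M.language :=
  interchange_lemma_general M r hr ρk hρk v w hx hctr
end
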